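/- Let G be a bipartite graph in which every vertex of the part U has an ordered neighborhood structure witnessing that G is [[0,1],[1,1]]-freeable, and suppose G contains no K_{k,k}. Then for n = |U| = |V|, the number of edges of G is at most 2n(k−1). -/

import Mathlib

/-!
Call a one-entry `(i, j)` of the biadjacency matrix *column-light* if fewer than `k - 1` ones lie
above it in its column, and *row-light* if fewer than `k - 1` ones lie left of it in its row.
A one that is neither gives a `K_{k,k}`: take `k - 1` ones above it and `k - 1` ones left of it;
the forbidden pattern `[[0,1],[1,1]]` forces ones at all the crossings. So every one is light.
Within a column the number of ones above strictly increases along the ones of that column, so each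
column has at most `k - 1` column-light ones, and likewise for rows: `2n(k - 1)` ones in total.
-/

open Finset

namespace Biadjacency

variable {α β : Type*}

def AvoidsCornerPattern [LinearOrder α] [LinearOrder β] (M : α → β → Bool) : Prop :=
  ∀ i₁ i₂ : α, ∀ j₁ j₂ : β, i₁ < i₂ → j₁ < j₂ →
    ¬(M i₁ j₁ = false ∧ M i₁ j₂ = true ∧ M i₂ j₁ = true ∧ M i₂ j₂ = true)

def HasBiclique (M : α → β → Bool) (r : ℕ) : Prop :=
  ∃ (R : Finset α) (C : Finset β), #R = r ∧ #C = r ∧ ∀ i ∈ R, ∀ j ∈ C, M i j = true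

def onesAbove [LinearOrder α] [Fintype α] (M : α → β → Bool) (i : α) (j : β) : Finset α :=
  univ.filter fun i' => i' < i ∧ M i' j = true

def onesLeft [LinearOrder β] [Fintype β] (M : α → β → Bool) (i : α) (j : β) : Finset β :=
  onesAbove (flip M) j i

@[simp]
lemma mem_onesAbove [LinearOrder α] [Fintype α] {M : α → β → Bool} {i i' : α} {j : β} :
    i' ∈ onesAbove M i j ↔ i' < i ∧ M i' j = true := by
  simp [onesAbove]

@[simp]
lemma mem_onesLeft [LinearOrder β] [Fintype β] {M : α → β → Bool} {i : α} {j j' : β} :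
    j' ∈ onesLeft M i j ↔ j' < j ∧ M i j' = true := by
  simp [onesLeft, flip]

lemma AvoidsCornerPattern.apply_of_lt [LinearOrder α] [LinearOrder β] {M : α → β → Bool}
    (hM : AvoidsCornerPattern M) {i₁ i₂ : α} {j₁ j₂ : β} (hi : i₁ < i₂) (hj : j₁ < j₂)
    (h₁₂ : M i₁ j₂ = true) (h₂₁ : M i₂ j₁ = true) (h₂₂ : M i₂ j₂ = true) : M i₁ j₁ = true := by
  by_contra h
  exact hM i₁ i₂ j₁ j₂ hi hj ⟨by simpa using h, h₁₂, h₂₁, h₂₂⟩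

lemma AvoidsCornerPattern.hasBiclique [LinearOrder α] [Fintype α] [LinearOrder β] [Fintype β]
    {M : α → β → Bool} (hM : AvoidsCornerPattern M) {i : α} {j : β} {r : ℕ}
    (hij : M i j = true) (habove : r ≤ #(onesAbove M i j)) (hleft : r ≤ #(onesLeft M i j)) :
    HasBiclique M (r + 1) := by
  obtain ⟨R, hR, hRcard⟩ := exists_subset_card_eq habove
  obtain ⟨C, hC, hCcard⟩ := exists_subset_card_eq hleft
  have hiR : i ∉ R := fun h => lt_irrefl i (mem_onesAbove.mp (hR h)).1
  have hjC : j ∉ C := fun h => lt_irrefl j (mem_onesLeft.mp (hC h)).1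
  refine ⟨insert i R, insert j C, by rw [card_insert_of_notMem hiR, hRcard],
    by rw [card_insert_of_notMem hjC, hCcard], ?_⟩
  intro i' hi' j' hj'
  rcases mem_insert.mp hi' with rfl | hi' <;> rcases mem_insert.mp hj' with rfl | hj'
  · exact hij
  · exact (mem_onesLeft.mp (hC hj')).2
  · exact (mem_onesAbove.mp (hR hi')).2
  · obtain ⟨hi'i, hi'j⟩ := mem_onesAbove.mp (hR hi')
    obtain ⟨hj'j, hij'⟩ := mem_onesLeft.mp (hC hj')
    exact hM.apply_of_lt hi'i hj'j hi'j hij' hij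

lemma card_onesAbove_strictMonoOn [LinearOrder α] [Fintype α] (M : α → β → Bool) (j : β) :
    StrictMonoOn (fun i => #(onesAbove M i j)) {i | M i j = true} := by
  intro i₁ h₁ i₂ _ hlt
  refine card_lt_card ⟨fun i' hi' => ?_, fun hsub => ?_⟩
  · obtain ⟨hlt', hi'⟩ := mem_onesAbove.mp hi'
    exact mem_onesAbove.mpr ⟨hlt'.trans hlt, hi'⟩
  · exact lt_irrefl i₁ (mem_onesAbove.mp (hsub (mem_onesAbove.mpr ⟨hlt, h₁⟩))).1

lemma card_filter_card_onesAbove_lt_le [LinearOrder α] [Fintype α] (M : α → β → Bool) (j : β)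
    (m : ℕ) :
    #(univ.filter fun i => M i j = true ∧ #(onesAbove M i j) < m) ≤ m := by
  have hinj := (card_onesAbove_strictMonoOn M j).injOn.mono
    (s₁ := ↑(univ.filter fun i => M i j = true ∧ #(onesAbove M i j) < m))
    (fun i hi => (mem_filter.mp hi).2.1)
  simpa using card_le_card_of_injOn _ (fun i hi => mem_range.mpr (mem_filter.mp hi).2.2) hinj

lemma card_filter_card_onesAbove_lt_le_mul [LinearOrder α] [Fintype α] [Fintype β]
    (M : α → β → Bool) (m : ℕ) :
    #(univ.filter fun p : α × β => M p.1 p.2 = true ∧ #(onesAbove M p.1 p.2) < m)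
      ≤ Fintype.card β * m := by
  calc #(univ.filter fun p : α × β => M p.1 p.2 = true ∧ #(onesAbove M p.1 p.2) < m)
      = ∑ j : β, #(univ.filter fun i => M i j = true ∧ #(onesAbove M i j) < m) := by
        simp only [card_filter]
        exact Fintype.sum_prod_type_right _
    _ ≤ ∑ _j : β, m := sum_le_sum fun j _ => card_filter_card_onesAbove_lt_le M j m
    _ = Fintype.card β * m := by simp

lemma card_filter_card_onesLeft_lt_le_mul [Fintype α] [LinearOrder β] [Fintype β]
    (M : α → β → Bool) (m : ℕ) :
    #(univ.filter fun p : α × β => M p.1 p.2 = true ∧ #(onesLeft M p.1 p.2) < m)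
      ≤ Fintype.card α * m := by
  refine le_trans (le_of_eq ?_) (card_filter_card_onesAbove_lt_le_mul (flip M) m)
  exact card_equiv (Equiv.prodComm α β) fun p => by
    simp only [mem_filter, mem_univ, true_and]
    rfl

lemma card_ones_le_of_light [LinearOrder α] [Fintype α] [LinearOrder β] [Fintype β]
    (M : α → β → Bool) (m : ℕ)
    (hlight : ∀ i j, M i j = true → #(onesAbove M i j) < m ∨ #(onesLeft M i j) < m) :
    #(univ.filter fun p : α × β => M p.1 p.2 = true)
      ≤ Fintype.card β * m + Fintype.card α * m := by
  calc #(univ.filter fun p : α × β => M p.1 p.2 = true)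
      ≤ #((univ.filter fun p : α × β => M p.1 p.2 = true ∧ #(onesAbove M p.1 p.2) < m) ∪
          (univ.filter fun p : α × β => M p.1 p.2 = true ∧ #(onesLeft M p.1 p.2) < m)) := by
        refine card_le_card fun p hp => ?_
        have hMp : M p.1 p.2 = true := (mem_filter.mp hp).2
        rcases hlight p.1 p.2 hMp with h | h
        · exact mem_union_left _ (mem_filter.mpr ⟨mem_univ _, hMp, h⟩)
        · exact mem_union_right _ (mem_filter.mpr ⟨mem_univ _, hMp, h⟩)
    _ ≤ _ := (card_union_le _ _).trans (add_le_add
          (card_filter_card_onesAbove_lt_le_mul M m) (card_filter_card_onesLeft_lt_le_mul M m))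

end Biadjacency

open Biadjacency in
/-- If a bipartite graph with parts of size `n` each is `[[0,1],[1,1]]`-freeable
(its biadjacency matrix, under the given orderings, avoids the pattern `[[0,1],[1,1]]`)
and contains no `K_{k,k}`, then it has at most `2n(k-1)` edges. -/
theorem stmt_19 {n k : ℕ} (M : Fin n → Fin n → Bool)
    (hpat : ∀ i₁ i₂ : Fin n, ∀ j₁ j₂ : Fin n, i₁ < i₂ → j₁ < j₂ →
      ¬(M i₁ j₁ = false ∧ M i₁ j₂ = true ∧ M i₂ j₁ = true ∧ M i₂ j₂ = true))
    (hK : ¬ ∃ (R : Finset (Fin n)) (C : Finset (Fin n)), R.card = k ∧ C.card = k ∧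
      ∀ i ∈ R, ∀ j ∈ C, M i j = true) :
    (Finset.univ.filter (fun p : Fin n × Fin n => M p.1 p.2 = true)).card
      ≤ 2 * n * (k - 1) := by
  obtain ⟨r, rfl⟩ : ∃ r, k = r + 1 :=
    Nat.exists_eq_add_one.mpr (Nat.pos_of_ne_zero fun hk => hK ⟨∅, ∅, by simp [hk]⟩)
  have hlight : ∀ i j, M i j = true → #(onesAbove M i j) < r ∨ #(onesLeft M i j) < r := by
    intro i j hij
    by_contra! h
    exact hK (AvoidsCornerPattern.hasBiclique hpat hij h.1 h.2)
  have := card_ones_le_of_light M r hlight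
  simp only [Fintype.card_fin] at this
  lia
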